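/- For all nonnegative integers a, b, i with a + i ≤ r and b ≤ r, and every choice ε₁, …, ε_i ∈ {0, 1}: t_{a+1}^{ε₁} t_{a+2}^{ε₂} ⋯ t_{a+i}^{ε_i} · D⁰_{ω_{a+i},ω_b} ⊆ D⁰_{ω_a,ω_b}. -/

import Mathlib

open SemidirectProduct

abbrev NB (r : ℕ) := Fin r → Multiplicative (ZMod 2)

def permAct (r : ℕ) : Equiv.Perm (Fin r) →* MulAut (NB r) where
  toFun σ :=
    { toFun := fun c => c ∘ σ.symm
      invFun := fun c => c ∘ σ
      left_inv := fun c => by ext i; simp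
      right_inv := fun c => by ext i; simp
      map_mul' := fun c d => rfl }
  map_one' := rfl
  map_mul' := fun σ τ => rfl

abbrev WB (r : ℕ) := NB r ⋊[permAct r] Equiv.Perm (Fin r)

/-- The vector `e_i` with single nonzero entry at position `i`. -/
def eVec (r : ℕ) (i : Fin r) : NB r := fun j => if j = i then Multiplicative.ofAdd 1 else 1

/-- `tB r i` is the element `t_{i+1} = (e_{i+1}, 1)` of the paper (0-indexed `i`). -/
def tB (r : ℕ) (i : ℕ) : WB r := if h : i < r then ⟨eVec r ⟨i, h⟩, 1⟩ else 1

/-- `sB r i` is the simple reflection `s_i = (0, (i, i+1))` of the paper (1-indexed,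
`1 ≤ i ≤ r - 1`); in 0-indexed terms it swaps positions `i-1` and `i`. -/
def sB (r : ℕ) (i : ℕ) : WB r :=
  if h : 0 < i ∧ i < r then ⟨1, Equiv.swap ⟨i - 1, by omega⟩ ⟨i, h.2⟩⟩ else 1

/-- The Coxeter generating set `S = {s₀, s₁, …, s_{r-1}}` where `s₀ = t₁`. -/
def genS (r : ℕ) : Set (WB r) :=
  {tB r 0} ∪ {w | ∃ i, 1 ≤ i ∧ i < r ∧ w = sB r i}

/-- Length with respect to `S`: the least `n` such that `w` is a product of `n`
elements of `S`. -/
noncomputable def len (r : ℕ) (w : WB r) : ℕ :=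
  sInf {n | ∃ l : List (WB r), (∀ x ∈ l, x ∈ genS r) ∧ l.length = n ∧ l.prod = w}

/-- `C_{ω_a} = ⟨t₁, …, t_a⟩`. -/
def Comega (r a : ℕ) : Subgroup (WB r) :=
  Subgroup.closure {w | ∃ i, i < a ∧ w = tB r i}

/-- Distinguished right `C_{ω_a}`-coset representatives. -/
def Dright (r a : ℕ) : Set (WB r) :=
  {d | ∀ w ∈ Comega r a, len r d ≤ len r (w * d)}

/-- Distinguished double `C_{ω_a}`-`C_{ω_b}` coset representatives. -/
def Dab (r a b : ℕ) : Set (WB r) :=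
  {d | d ∈ Dright r a ∧ d⁻¹ ∈ Dright r b}

/-- Distinguished double coset representatives with the trivial intersection property. -/
def D0 (r a b : ℕ) : Set (WB r) :=
  {d | d ∈ Dab r a b ∧ ∀ x ∈ Comega r a, d⁻¹ * x * d ∈ Comega r b → x = 1}

/-- `n₀ w` : the number of nonzero coordinates of the `(ZMod 2)^r`-component of `w`. -/
def n0 (r : ℕ) (w : WB r) : ℕ :=
  (Finset.univ.filter fun i => w.left i ≠ 1).card

open Finset

section Basics
variable {r : ℕ}

lemma permAct_apply (σ : Equiv.Perm (Fin r)) (c : NB r) (k : Fin r) :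
    permAct r σ c k = c (σ.symm k) := rfl

lemma zmod2_cases (x : Multiplicative (ZMod 2)) :
    x = 1 ∨ x = Multiplicative.ofAdd (1 : ZMod 2) := by revert x; decide

lemma zmod2_mul_self (x : Multiplicative (ZMod 2)) : x * x = 1 := by revert x; decide

lemma ofAdd_one_ne_one : (Multiplicative.ofAdd (1 : ZMod 2)) ≠ 1 := by decide

lemma WB.ext {g h : WB r} (h1 : g.left = h.left) (h2 : g.right = h.right) : g = h :=
  SemidirectProduct.ext h1 h2

lemma tB_fin (j : Fin r) : tB r (j : ℕ) = ⟨eVec r j, 1⟩ := by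
  simp [tB, j.isLt]

lemma tB_mul_left (j : Fin r) (w : WB r) (k : Fin r) :
    (tB r (j : ℕ) * w).left k = (if k = j then Multiplicative.ofAdd (1 : ZMod 2) else 1) * w.left k := by
  rw [tB_fin]
  rfl

lemma tB_mul_right (j : Fin r) (w : WB r) : (tB r (j : ℕ) * w).right = w.right := by
  rw [tB_fin, mul_right]
  exact one_mul _

lemma tB_mul_tB (j : Fin r) (w : WB r) : tB r (j:ℕ) * (tB r (j:ℕ) * w) = w := by
  rw [← mul_assoc]
  convert one_mul w
  rw [tB_fin]
  refine WB.ext ?_ (one_mul _)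
  funext k
  show eVec r j k * eVec r j k = 1
  exact zmod2_mul_self _

end Basics
section Linv
variable {r : ℕ}

/-- signed value of position `p` under `w`. -/
def Vf (w : WB r) (p : Fin r) : ℤ :=
  if w.left (w.right p) = 1 then ((w.right p : ℕ) : ℤ) + 1 else -(((w.right p : ℕ) : ℤ) + 1)

lemma Vf_abs (w : WB r) (p : Fin r) : |Vf w p| = ((w.right p : ℕ) : ℤ) + 1 := by
  unfold Vf
  split
  · rw [abs_of_nonneg] ; positivity
  · rw [abs_neg, abs_of_nonneg] ; positivity

def invf {r : ℕ} (V : Fin r → ℤ) : ℕ :=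
  ((Finset.univ : Finset (Fin r × Fin r)).filter fun z => z.1 < z.2 ∧ V z.2 < V z.1).card

def nsum (w : WB r) : ℕ := ∑ j ∈ Finset.univ.filter (fun j => w.left j ≠ 1), ((j : ℕ) + 1)

def LB (w : WB r) : ℕ := invf (Vf w) + nsum w

/-- key single-position change bound for inversions -/
lemma invf_single_le (V V' : Fin r → ℤ) (p : Fin r) (T : Finset (Fin r))
    (hV : ∀ x, x ≠ p → V' x = V x)
    (hT : ∀ t, t ≠ p → t ∉ T → ((V t < V p ↔ V t < V' p) ∧ (V p < V t ↔ V' p < V t))) :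
    invf V' ≤ invf V + T.card := by
  classical
  set S := (Finset.univ : Finset (Fin r × Fin r)).filter fun z => z.1 < z.2 ∧ V z.2 < V z.1 with hS
  set S' := (Finset.univ : Finset (Fin r × Fin r)).filter fun z => z.1 < z.2 ∧ V' z.2 < V' z.1 with hS'
  have hsub : S' ⊆ S ∪ T.image (fun t => if t < p then (t, p) else (p, t)) := by
    intro z hz
    rw [Finset.mem_filter] at hz
    obtain ⟨-, hlt, hinv⟩ := hz
    by_cases hzs : z ∈ S
    · exact Finset.mem_union_left _ hzs
    · refine Finset.mem_union_right _ ?_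
      rw [Finset.mem_image]
      by_cases h1 : z.1 = p
      · -- z = (p, z.2), so z.2 is the other coordinate
        have h2 : z.2 ≠ p := by intro h; rw [h, h1] at hlt; exact lt_irrefl _ hlt
        by_cases h2T : z.2 ∈ T
        · refine ⟨z.2, h2T, ?_⟩
          rw [if_neg (by rw [← h1]; exact not_lt.2 hlt.le), ← h1]
        · exfalso
          apply hzs
          rw [hS, Finset.mem_filter]
          refine ⟨Finset.mem_univ _, hlt, ?_⟩
          have := (hT z.2 h2 h2T).1
          rw [hV z.2 h2] at hinv
          rw [h1] at hinv ⊢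
          exact this.2 hinv
      · by_cases h2 : z.2 = p
        · by_cases h1T : z.1 ∈ T
          · refine ⟨z.1, h1T, ?_⟩
            rw [if_pos (by rw [← h2]; exact hlt), ← h2]
          · exfalso
            apply hzs
            rw [hS, Finset.mem_filter]
            refine ⟨Finset.mem_univ _, hlt, ?_⟩
            have := (hT z.1 h1 h1T).2
            rw [hV z.1 h1] at hinv
            rw [h2] at hinv ⊢
            exact this.2 hinv
        · exfalso
          apply hzs
          rw [hS, Finset.mem_filter]
          rw [hV z.1 h1, hV z.2 h2] at hinv
          exact ⟨Finset.mem_univ _, hlt, hinv⟩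
  calc S'.card ≤ (S ∪ T.image _).card := Finset.card_le_card hsub
    _ ≤ S.card + (T.image _).card := Finset.card_union_le _ _
    _ ≤ S.card + T.card := by
        exact Nat.add_le_add_left (Finset.card_image_le) _

lemma invf_single_ge (V V' : Fin r → ℤ) (p : Fin r) (T : Finset (Fin r))
    (hV : ∀ x, x ≠ p → V' x = V x)
    (hT : ∀ t, t ≠ p → t ∉ T → ((V t < V p ↔ V t < V' p) ∧ (V p < V t ↔ V' p < V t))) :
    invf V ≤ invf V' + T.card := by
  refine invf_single_le V' V p T (fun x hx => (hV x hx).symm) ?_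
  intro t ht htT
  rw [hV t ht]
  exact ⟨(hT t ht htT).1.symm, (hT t ht htT).2.symm⟩

/-- exact two-position swap lemma for inversions -/
lemma invf_pair (V V' : Fin r → ℤ) (p q : Fin r) (hpq : p < q)
    (hV : ∀ x, x ≠ p → x ≠ q → V' x = V x)
    (hP : ∀ t, t ≠ p → t ≠ q → ((V t < V p ↔ V t < V' p) ∧ (V p < V t ↔ V' p < V t)))
    (hQ : ∀ t, t ≠ p → t ≠ q → ((V t < V q ↔ V t < V' q) ∧ (V q < V t ↔ V' q < V t))) :
    invf V' + (if V q < V p then 1 else 0) = invf V + (if V' q < V' p then 1 else 0) := by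
  classical
  set S := (Finset.univ : Finset (Fin r × Fin r)).filter fun z => z.1 < z.2 ∧ V z.2 < V z.1 with hS
  set S' := (Finset.univ : Finset (Fin r × Fin r)).filter fun z => z.1 < z.2 ∧ V' z.2 < V' z.1 with hS'
  have hqp : q ≠ p := ne_of_gt hpq
  have herase : S'.erase (p, q) = S.erase (p, q) := by
    ext z
    rw [Finset.mem_erase, Finset.mem_erase, hS, hS', Finset.mem_filter, Finset.mem_filter]
    constructor <;> rintro ⟨hne, -, hlt, hinv⟩ <;> refine ⟨hne, Finset.mem_univ _, hlt, ?_⟩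
    · -- from V' inversion to V inversion
      by_cases h1p : z.1 = p
      · have h2q : z.2 ≠ q := fun h => hne (by rw [Prod.ext_iff, h1p, h]; exact ⟨rfl, rfl⟩)
        have h2p : z.2 ≠ p := fun h => absurd (h ▸ h1p ▸ hlt) (lt_irrefl _)
        rw [hV z.2 h2p h2q] at hinv
        rw [h1p] at hinv ⊢
        exact (hP z.2 h2p h2q).1.2 hinv
      · by_cases h1q : z.1 = q
        · have h2p : z.2 ≠ p := fun h => absurd (hpq.trans (h ▸ h1q ▸ hlt)) (lt_irrefl _)
          have h2q : z.2 ≠ q := fun h => absurd (h ▸ h1q ▸ hlt) (lt_irrefl _)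
          rw [hV z.2 h2p h2q] at hinv
          rw [h1q] at hinv ⊢
          exact (hQ z.2 h2p h2q).1.2 hinv
        · by_cases h2p : z.2 = p
          · rw [hV z.1 h1p h1q] at hinv
            rw [h2p] at hinv ⊢
            exact (hP z.1 h1p h1q).2.2 hinv
          · by_cases h2q : z.2 = q
            · rw [hV z.1 h1p h1q] at hinv
              rw [h2q] at hinv ⊢
              exact (hQ z.1 h1p h1q).2.2 hinv
            · rw [hV z.1 h1p h1q, hV z.2 h2p h2q] at hinv
              exact hinv
    · by_cases h1p : z.1 = p
      · have h2q : z.2 ≠ q := fun h => hne (by rw [Prod.ext_iff, h1p, h]; exact ⟨rfl, rfl⟩)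
        have h2p : z.2 ≠ p := fun h => absurd (h ▸ h1p ▸ hlt) (lt_irrefl _)
        rw [hV z.2 h2p h2q]
        rw [h1p] at hinv ⊢
        exact (hP z.2 h2p h2q).1.1 hinv
      · by_cases h1q : z.1 = q
        · have h2p : z.2 ≠ p := fun h => absurd (hpq.trans (h ▸ h1q ▸ hlt)) (lt_irrefl _)
          have h2q : z.2 ≠ q := fun h => absurd (h ▸ h1q ▸ hlt) (lt_irrefl _)
          rw [hV z.2 h2p h2q]
          rw [h1q] at hinv ⊢
          exact (hQ z.2 h2p h2q).1.1 hinv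
        · by_cases h2p : z.2 = p
          · rw [hV z.1 h1p h1q]
            rw [h2p] at hinv ⊢
            exact (hP z.1 h1p h1q).2.1 hinv
          · by_cases h2q : z.2 = q
            · rw [hV z.1 h1p h1q]
              rw [h2q] at hinv ⊢
              exact (hQ z.1 h1p h1q).2.1 hinv
            · rw [hV z.1 h1p h1q, hV z.2 h2p h2q]
              exact hinv
  have hcard : ∀ (W : Fin r → ℤ) (SS : Finset (Fin r × Fin r)),
      SS = (Finset.univ : Finset (Fin r × Fin r)).filter (fun z => z.1 < z.2 ∧ W z.2 < W z.1) →
      SS.card = (SS.erase (p, q)).card + (if W q < W p then 1 else 0) := by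
    intro W SS hSS
    by_cases hmem : (p, q) ∈ SS
    · have : W q < W p := by
        rw [hSS, Finset.mem_filter] at hmem
        exact hmem.2.2
      rw [if_pos this, Finset.card_erase_of_mem hmem]
      have := Finset.card_pos.2 ⟨_, hmem⟩
      omega
    · have : ¬ W q < W p := by
        intro h
        exact hmem (by rw [hSS, Finset.mem_filter]; exact ⟨Finset.mem_univ _, hpq, h⟩)
      rw [if_neg this, Finset.erase_eq_of_notMem hmem]
      omega
    
  show S'.card + _ = S.card + _
  rw [hcard V S hS, hcard V' S' hS', herase]
  omega

end Linv
section Flip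
variable {r : ℕ}

lemma cmp_big {A B t : ℤ} (hB : B = -A) (h : |A| < |t|) :
    (t < A ↔ t < B) ∧ (A < t ↔ B < t) := by
  rcases abs_cases A with ⟨h1, h2⟩ | ⟨h1, h2⟩ <;> rcases abs_cases t with ⟨h3, h4⟩ | ⟨h3, h4⟩ <;>
    constructor <;> constructor <;> intro <;> omega

lemma Vf_tB (j : Fin r) (w : WB r) (p : Fin r) :
    Vf (tB r (j:ℕ) * w) p = if w.right p = j then -Vf w p else Vf w p := by
  unfold Vf
  rw [tB_mul_right, tB_mul_left]
  by_cases h : w.right p = j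
  · rw [if_pos h, if_pos h]
    rcases zmod2_cases (w.left (w.right p)) with h1 | h1 <;> rw [h1]
    · simp [ofAdd_one_ne_one]
    · have h2 : Multiplicative.ofAdd (1:ZMod 2) * Multiplicative.ofAdd (1:ZMod 2) = 1 :=
        zmod2_mul_self _
      simp [h2, ofAdd_one_ne_one]
  · rw [if_neg h, if_neg h, one_mul]

lemma nsum_tB_of_one (j : Fin r) (w : WB r) (h : w.left j = 1) :
    nsum (tB r (j:ℕ) * w) = nsum w + ((j:ℕ) + 1) := by
  unfold nsum
  have hfe : (Finset.univ.filter fun k => (tB r (j:ℕ) * w).left k ≠ 1)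
      = insert j (Finset.univ.filter fun k => w.left k ≠ 1) := by
    ext k
    rw [Finset.mem_insert, Finset.mem_filter, Finset.mem_filter]
    by_cases hk : k = j
    · subst hk
      simp [tB_mul_left, h, ofAdd_one_ne_one]
    · simp only [tB_mul_left, if_neg hk, one_mul]
      constructor
      · rintro ⟨-, h2⟩; exact Or.inr ⟨Finset.mem_univ _, h2⟩
      · rintro (h2 | ⟨-, h2⟩)
        · exact absurd h2 hk
        · exact ⟨Finset.mem_univ _, h2⟩
  rw [hfe, Finset.sum_insert (by simp [h])]
  omega

lemma tB_left_one (j : Fin r) (w : WB r) (h : w.left j ≠ 1) :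
    (tB r (j:ℕ) * w).left j = 1 := by
  rw [tB_mul_left, if_pos rfl]
  rcases zmod2_cases (w.left j) with h1 | h1
  · exact absurd h1 h
  · rw [h1]; exact zmod2_mul_self _

lemma nsum_tB_of_ne (j : Fin r) (w : WB r) (h : w.left j ≠ 1) :
    nsum w = nsum (tB r (j:ℕ) * w) + ((j:ℕ) + 1) := by
  have := nsum_tB_of_one j (tB r (j:ℕ) * w) (tB_left_one j w h)
  rw [tB_mul_tB] at this
  omega

lemma card_small (j : Fin r) (σ : Equiv.Perm (Fin r)) :
    (Finset.univ.filter fun t : Fin r => ((σ t : ℕ) : ℤ) + 1 < ((j:ℕ) : ℤ) + 1).card ≤ (j:ℕ) := by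
  have hmaps : ∀ t ∈ (Finset.univ.filter fun t : Fin r => ((σ t : ℕ) : ℤ) + 1 < ((j:ℕ):ℤ) + 1),
      (σ t : ℕ) ∈ Finset.range (j:ℕ) := by
    intro t ht
    rw [Finset.mem_filter] at ht
    rw [Finset.mem_range]
    have := ht.2
    omega
  calc _ ≤ (Finset.range (j:ℕ)).card := by
        apply Finset.card_le_card_of_injOn (fun t => ((σ t : ℕ))) hmaps
        intro x _ y _ hxy
        exact σ.injective (Fin.val_injective hxy)
    _ = (j:ℕ) := Finset.card_range _

lemma L_flip (j : Fin r) (w : WB r) (h : w.left j = 1) :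
    LB w + 1 ≤ LB (tB r (j:ℕ) * w) := by
  classical
  have hσp : w.right (w.right.symm j) = j := w.right.apply_symm_apply j
  set p := w.right.symm j with hp
  have hVeq : ∀ x, x ≠ p → Vf (tB r (j:ℕ) * w) x = Vf w x := by
    intro x hx
    rw [Vf_tB, if_neg]
    intro hc
    exact hx (by rw [hp, ← hc, Equiv.symm_apply_apply])
  have hVp : Vf (tB r (j:ℕ) * w) p = -Vf w p := by rw [Vf_tB, if_pos hσp]
  set T := Finset.univ.filter (fun t : Fin r => ((w.right t : ℕ) : ℤ) + 1 < ((j:ℕ):ℤ) + 1) with hT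
  have hTcard : T.card ≤ (j:ℕ) := card_small j w.right
  have hinv : invf (Vf w) ≤ invf (Vf (tB r (j:ℕ) * w)) + T.card := by
    apply invf_single_ge _ _ p T hVeq
    intro t ht htT
    apply cmp_big hVp
    rw [Vf_abs, Vf_abs, hσp]
    have h1 : ¬ (((w.right t : ℕ) : ℤ) + 1 < ((j:ℕ):ℤ) + 1) := by
      intro hc
      exact htT (by rw [hT, Finset.mem_filter]; exact ⟨Finset.mem_univ _, hc⟩)
    have h2 : (w.right t : ℕ) ≠ (j : ℕ) := by
      intro hc
      exact ht (by rw [hp, ← Fin.val_injective hc, Equiv.symm_apply_apply])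
    omega
  have hns := nsum_tB_of_one j w h
  unfold LB at *
  omega

lemma L_flip' (j : Fin r) (w : WB r) (h : w.left j ≠ 1) :
    LB (tB r (j:ℕ) * w) + 1 ≤ LB w := by
  have := L_flip j (tB r (j:ℕ) * w) (tB_left_one j w h)
  rw [tB_mul_tB] at this
  exact this

lemma L_flip_le0 (j : Fin r) (hj0 : (j : ℕ) = 0) (w : WB r) :
    LB (tB r (j:ℕ) * w) ≤ LB w + 1 := by
  classical
  by_cases h : w.left j = 1
  · have hσp : w.right (w.right.symm j) = j := w.right.apply_symm_apply j
    set p := w.right.symm j with hp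
    have hVeq : ∀ x, x ≠ p → Vf (tB r (j:ℕ) * w) x = Vf w x := by
      intro x hx
      rw [Vf_tB, if_neg]
      intro hc
      exact hx (by rw [hp, ← hc, Equiv.symm_apply_apply])
    have hVp : Vf (tB r (j:ℕ) * w) p = -Vf w p := by rw [Vf_tB, if_pos hσp]
    have hinv : invf (Vf (tB r (j:ℕ) * w)) ≤ invf (Vf w) + (∅ : Finset (Fin r)).card := by
      apply invf_single_le _ _ p ∅ hVeq
      intro t ht _
      apply cmp_big hVp
      rw [Vf_abs, Vf_abs, hσp]
      have h2 : (w.right t : ℕ) ≠ (j : ℕ) := by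
        intro hc
        exact ht (by rw [hp, ← Fin.val_injective hc, Equiv.symm_apply_apply])
      omega
    have hns := nsum_tB_of_one j w h
    simp only [Finset.card_empty] at hinv
    show invf (Vf (tB r (j:ℕ) * w)) + nsum (tB r (j:ℕ) * w) ≤ invf (Vf w) + nsum w + 1
    omega
  · have := L_flip' j w h
    omega

lemma L_t0_le (hr : 0 < r) (w : WB r) : LB (tB r 0 * w) ≤ LB w + 1 :=
  L_flip_le0 (⟨0, hr⟩ : Fin r) rfl w

end Flip
section Swap
variable {r : ℕ}

lemma cmp_small {m A A' t : ℤ} (hm : 0 < m)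
    (hA : (A = m ∧ A' = m+1) ∨ (A = -m ∧ A' = -(m+1)) ∨ (A = m+1 ∧ A' = m) ∨ (A = -(m+1) ∧ A' = -m))
    (ht : ∃ k : ℤ, 0 < k ∧ (t = k ∨ t = -k) ∧ k ≠ m ∧ k ≠ m + 1) :
    (t < A ↔ t < A') ∧ (A < t ↔ A' < t) := by
  obtain ⟨k, hk, htk, hk1, hk2⟩ := ht
  rcases hA with ⟨ha1, ha2⟩ | ⟨ha1, ha2⟩ | ⟨ha1, ha2⟩ | ⟨ha1, ha2⟩ <;> rcases htk with h3 | h3 <;>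
    constructor <;> constructor <;> intro <;> omega

lemma sB_eq (i : ℕ) (h1 : 1 ≤ i) (h2 : i < r) (i1 i2 : Fin r)
    (hi1 : (i1 : ℕ) = i - 1) (hi2 : (i2 : ℕ) = i) :
    sB r i = ⟨1, Equiv.swap i1 i2⟩ := by
  rw [sB, dif_pos ⟨h1, h2⟩]
  have e1 : i1 = (⟨i - 1, by omega⟩ : Fin r) := Fin.ext (by simp [hi1])
  have e2 : i2 = (⟨i, h2⟩ : Fin r) := Fin.ext (by simp [hi2])
  rw [e1, e2]

lemma sB_mul_left (i : ℕ) (h1 : 1 ≤ i) (h2 : i < r) (i1 i2 : Fin r)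
    (hi1 : (i1 : ℕ) = i - 1) (hi2 : (i2 : ℕ) = i) (w : WB r) (k : Fin r) :
    (sB r i * w).left k = w.left (Equiv.swap i1 i2 k) := by
  rw [sB_eq i h1 h2 i1 i2 hi1 hi2, mul_left]
  show 1 * (permAct r (Equiv.swap i1 i2)) w.left k = _
  rw [one_mul, permAct_apply, Equiv.symm_swap]

lemma sB_mul_right (i : ℕ) (h1 : 1 ≤ i) (h2 : i < r) (i1 i2 : Fin r)
    (hi1 : (i1 : ℕ) = i - 1) (hi2 : (i2 : ℕ) = i) (w : WB r) (k : Fin r) :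
    (sB r i * w).right k = Equiv.swap i1 i2 (w.right k) := by
  rw [sB_eq i h1 h2 i1 i2 hi1 hi2, mul_right]
  rfl

lemma Vf_sB_apply (i : ℕ) (h1 : 1 ≤ i) (h2 : i < r) (i1 i2 : Fin r)
    (hi1 : (i1 : ℕ) = i - 1) (hi2 : (i2 : ℕ) = i) (w : WB r) (p : Fin r) :
    Vf (sB r i * w) p = if w.left (w.right p) = 1
      then ((Equiv.swap i1 i2 (w.right p) : ℕ) : ℤ) + 1
      else -(((Equiv.swap i1 i2 (w.right p) : ℕ) : ℤ) + 1) := by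
  unfold Vf
  rw [sB_mul_right i h1 h2 i1 i2 hi1 hi2, sB_mul_left i h1 h2 i1 i2 hi1 hi2,
    Equiv.swap_apply_self]

lemma nsum_sB (i : ℕ) (h1 : 1 ≤ i) (h2 : i < r) (i1 i2 : Fin r)
    (hi1 : (i1 : ℕ) = i - 1) (hi2 : (i2 : ℕ) = i) (w : WB r) :
    nsum (sB r i * w) + (if w.left i2 = 1 then 0 else 1)
      = nsum w + (if w.left i1 = 1 then 0 else 1) := by
  classical
  set τ := Equiv.swap i1 i2 with hτ
  have hne : i1 ≠ i2 := by
    intro h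
    rw [Fin.ext_iff, hi1, hi2] at h
    omega
  have e1 : nsum (sB r i * w) = ∑ k ∈ Finset.univ, (if w.left (τ k) ≠ 1 then (k : ℕ) + 1 else 0) := by
    unfold nsum
    rw [Finset.sum_filter]
    apply Finset.sum_congr rfl
    intro k _
    rw [sB_mul_left i h1 h2 i1 i2 hi1 hi2]
  have e2 : ∑ k ∈ Finset.univ, (if w.left (τ k) ≠ 1 then ((k : ℕ) + 1) else 0)
      = ∑ m ∈ Finset.univ, (if w.left m ≠ 1 then ((τ m : ℕ) + 1) else 0) := by
    rw [← Equiv.sum_comp τ (fun m => if w.left m ≠ 1 then ((τ m : ℕ) + 1) else 0)]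
    apply Finset.sum_congr rfl
    intro k _
    rw [hτ, Equiv.swap_apply_self]
  set F := fun m => if w.left m ≠ 1 then ((τ m : ℕ) + 1) else 0 with hF
  set G := fun m => if w.left m ≠ 1 then ((m : ℕ) + 1) else 0 with hG
  have nsw : nsum w = ∑ m ∈ Finset.univ, G m := by
    unfold nsum
    rw [Finset.sum_filter]
  have hsplitF : ∑ m ∈ Finset.univ, F m
      = F i1 + (F i2 + ∑ m ∈ (Finset.univ.erase i1).erase i2, F m) := by
    rw [Finset.add_sum_erase _ F (Finset.mem_erase.2 ⟨hne.symm, Finset.mem_univ _⟩),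
      Finset.add_sum_erase _ F (Finset.mem_univ _)]
  have hsplitG : ∑ m ∈ Finset.univ, G m
      = G i1 + (G i2 + ∑ m ∈ (Finset.univ.erase i1).erase i2, G m) := by
    rw [Finset.add_sum_erase _ G (Finset.mem_erase.2 ⟨hne.symm, Finset.mem_univ _⟩),
      Finset.add_sum_erase _ G (Finset.mem_univ _)]
  have hrest : ∑ m ∈ (Finset.univ.erase i1).erase i2, F m
      = ∑ m ∈ (Finset.univ.erase i1).erase i2, G m := by
    apply Finset.sum_congr rfl
    intro m hm
    rw [Finset.mem_erase, Finset.mem_erase] at hm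
    rw [hF, hG]
    simp only
    rw [hτ, Equiv.swap_apply_of_ne_of_ne hm.2.1 hm.1]
  have hτ1 : τ i1 = i2 := Equiv.swap_apply_left _ _
  have hτ2 : τ i2 = i1 := Equiv.swap_apply_right _ _
  have hFi1 : F i1 = if w.left i1 ≠ 1 then ((i2 : ℕ) + 1) else 0 := by rw [hF]; simp only [hτ1]
  have hFi2 : F i2 = if w.left i2 ≠ 1 then ((i1 : ℕ) + 1) else 0 := by rw [hF]; simp only [hτ2]
  have hGi1 : G i1 = if w.left i1 ≠ 1 then ((i1 : ℕ) + 1) else 0 := rfl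
  have hGi2 : G i2 = if w.left i2 ≠ 1 then ((i2 : ℕ) + 1) else 0 := rfl
  rw [e1, e2, hsplitF, nsw, hsplitG, hrest, hFi1, hFi2, hGi1, hGi2]
  by_cases hc1 : w.left i1 = 1 <;> by_cases hc2 : w.left i2 = 1 <;>
    simp only [hc1, hc2, if_pos, if_neg, ne_eq, not_true_eq_false, not_false_eq_true,
      ite_true, ite_false] <;> omega

lemma L_s_master (i : ℕ) (h1 : 1 ≤ i) (h2 : i < r) (w : WB r)
    (i1 i2 : Fin r) (hi1 : (i1 : ℕ) = i - 1) (hi2 : (i2 : ℕ) = i) :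
    LB (sB r i * w) + (if w.left i2 = 1 then 0 else 1)
        + (if w.right.symm i1 < w.right.symm i2
            then (if Vf w (w.right.symm i2) < Vf w (w.right.symm i1) then 1 else 0)
            else (if Vf w (w.right.symm i1) < Vf w (w.right.symm i2) then 1 else 0))
      = LB w + (if w.left i1 = 1 then 0 else 1)
        + (if w.right.symm i1 < w.right.symm i2
            then (if Vf (sB r i * w) (w.right.symm i2) < Vf (sB r i * w) (w.right.symm i1) then 1 else 0)
            else (if Vf (sB r i * w) (w.right.symm i1) < Vf (sB r i * w) (w.right.symm i2) then 1 else 0)) := by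
  classical
  have hne : i1 ≠ i2 := by
    intro h
    rw [Fin.ext_iff, hi1, hi2] at h
    omega
  have hpq : w.right.symm i1 ≠ w.right.symm i2 := fun h => hne (w.right.symm.injective h)
  have hVoff : ∀ x, x ≠ w.right.symm i1 → x ≠ w.right.symm i2 → Vf (sB r i * w) x = Vf w x := by
    intro x hx1 hx2
    rw [Vf_sB_apply i h1 h2 i1 i2 hi1 hi2, Equiv.swap_apply_of_ne_of_ne]
    · rfl
    · intro h; exact hx1 (by rw [← h, Equiv.symm_apply_apply])
    · intro h; exact hx2 (by rw [← h, Equiv.symm_apply_apply])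
  -- comparison data
  have habs : ∀ t, t ≠ w.right.symm i1 → t ≠ w.right.symm i2 →
      ∃ k : ℤ, 0 < k ∧ (Vf w t = k ∨ Vf w t = -k) ∧ k ≠ (i : ℤ) ∧ k ≠ (i : ℤ) + 1 := by
    intro t ht1 ht2
    refine ⟨((w.right t : ℕ) : ℤ) + 1, by positivity, ?_, ?_, ?_⟩
    · unfold Vf
      split
      · exact Or.inl rfl
      · exact Or.inr rfl
    · intro h
      apply ht1
      have : (w.right t : ℕ) = (i1 : ℕ) := by rw [hi1]; omega
      rw [← Fin.val_injective this, Equiv.symm_apply_apply]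
    · intro h
      apply ht2
      have : (w.right t : ℕ) = (i2 : ℕ) := by rw [hi2]; omega
      rw [← Fin.val_injective this, Equiv.symm_apply_apply]
  have hVp : Vf w (w.right.symm i1) = if w.left i1 = 1 then (i : ℤ) else -(i : ℤ) := by
    unfold Vf
    rw [Equiv.apply_symm_apply, hi1]
    have : (((i - 1 : ℕ) : ℤ)) + 1 = (i : ℤ) := by omega
    rw [this]
  have hVq : Vf w (w.right.symm i2) = if w.left i2 = 1 then (i : ℤ) + 1 else -((i : ℤ) + 1) := by
    unfold Vf
    rw [Equiv.apply_symm_apply, hi2]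
  have hVp' : Vf (sB r i * w) (w.right.symm i1)
      = if w.left i1 = 1 then (i : ℤ) + 1 else -((i : ℤ) + 1) := by
    rw [Vf_sB_apply i h1 h2 i1 i2 hi1 hi2, Equiv.apply_symm_apply, Equiv.swap_apply_left, hi2]
  have hVq' : Vf (sB r i * w) (w.right.symm i2)
      = if w.left i2 = 1 then (i : ℤ) else -(i : ℤ) := by
    rw [Vf_sB_apply i h1 h2 i1 i2 hi1 hi2, Equiv.apply_symm_apply, Equiv.swap_apply_right, hi1]
    have : (((i - 1 : ℕ) : ℤ)) + 1 = (i : ℤ) := by omega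
    rw [this]
  have hcmpP : ∀ t, t ≠ w.right.symm i1 → t ≠ w.right.symm i2 →
      ((Vf w t < Vf w (w.right.symm i1) ↔ Vf w t < Vf (sB r i * w) (w.right.symm i1)) ∧
       (Vf w (w.right.symm i1) < Vf w t ↔ Vf (sB r i * w) (w.right.symm i1) < Vf w t)) := by
    intro t ht1 ht2
    apply cmp_small (m := (i : ℤ)) (by exact_mod_cast h1) ?_ (habs t ht1 ht2)
    rw [hVp, hVp']
    by_cases hc : w.left i1 = 1
    · rw [if_pos hc, if_pos hc]; exact Or.inl ⟨rfl, rfl⟩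
    · rw [if_neg hc, if_neg hc]; exact Or.inr (Or.inl ⟨rfl, rfl⟩)
  have hcmpQ : ∀ t, t ≠ w.right.symm i1 → t ≠ w.right.symm i2 →
      ((Vf w t < Vf w (w.right.symm i2) ↔ Vf w t < Vf (sB r i * w) (w.right.symm i2)) ∧
       (Vf w (w.right.symm i2) < Vf w t ↔ Vf (sB r i * w) (w.right.symm i2) < Vf w t)) := by
    intro t ht1 ht2
    apply cmp_small (m := (i : ℤ)) (by exact_mod_cast h1) ?_ (habs t ht1 ht2)
    rw [hVq, hVq']
    by_cases hc : w.left i2 = 1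
    · rw [if_pos hc, if_pos hc]; exact Or.inr (Or.inr (Or.inl ⟨rfl, rfl⟩))
    · rw [if_neg hc, if_neg hc]; exact Or.inr (Or.inr (Or.inr ⟨rfl, rfl⟩))
  have hns := nsum_sB i h1 h2 i1 i2 hi1 hi2 w
  rcases lt_trichotomy (w.right.symm i1) (w.right.symm i2) with hlt | heq | hgt
  · have hpair := invf_pair (Vf w) (Vf (sB r i * w)) (w.right.symm i1) (w.right.symm i2) hlt
      hVoff hcmpP hcmpQ
    rw [if_pos hlt, if_pos hlt]
    unfold LB
    omega
  · exact absurd heq hpq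
  · have hpair := invf_pair (Vf w) (Vf (sB r i * w)) (w.right.symm i2) (w.right.symm i1) hgt
      (fun x hx2 hx1 => hVoff x hx1 hx2) (fun t ht2 ht1 => hcmpQ t ht1 ht2)
      (fun t ht2 ht1 => hcmpP t ht1 ht2)
    rw [if_neg (not_lt.2 hgt.le), if_neg (not_lt.2 hgt.le)]
    unfold LB
    omega

end Swap
section SwapCor
variable {r : ℕ}

lemma Vf_eval1 (i : ℕ) (h1 : 1 ≤ i) (i1 : Fin r) (hi1 : (i1 : ℕ) = i - 1) (w : WB r) :
    Vf w (w.right.symm i1) = if w.left i1 = 1 then (i : ℤ) else -(i : ℤ) := by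
  unfold Vf
  rw [Equiv.apply_symm_apply]
  have e : (((i1 : ℕ)) : ℤ) + 1 = (i : ℤ) := by have := hi1; omega
  rw [e]

lemma Vf_eval2 (i : ℕ) (i2 : Fin r) (hi2 : (i2 : ℕ) = i) (w : WB r) :
    Vf w (w.right.symm i2) = if w.left i2 = 1 then (i : ℤ) + 1 else -((i : ℤ) + 1) := by
  unfold Vf
  rw [Equiv.apply_symm_apply]
  have e : (((i2 : ℕ)) : ℤ) + 1 = (i : ℤ) + 1 := by have := hi2; omega
  rw [e]

lemma Vf_eval3 (i : ℕ) (h1 : 1 ≤ i) (h2 : i < r) (i1 i2 : Fin r)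
    (hi1 : (i1 : ℕ) = i - 1) (hi2 : (i2 : ℕ) = i) (w : WB r) :
    Vf (sB r i * w) (w.right.symm i1) = if w.left i1 = 1 then (i : ℤ) + 1 else -((i : ℤ) + 1) := by
  rw [Vf_sB_apply i h1 h2 i1 i2 hi1 hi2, Equiv.apply_symm_apply, Equiv.swap_apply_left]
  have e : (((i2 : ℕ)) : ℤ) + 1 = (i : ℤ) + 1 := by have := hi2; omega
  rw [e]

lemma Vf_eval4 (i : ℕ) (h1 : 1 ≤ i) (h2 : i < r) (i1 i2 : Fin r)
    (hi1 : (i1 : ℕ) = i - 1) (hi2 : (i2 : ℕ) = i) (w : WB r) :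
    Vf (sB r i * w) (w.right.symm i2) = if w.left i2 = 1 then (i : ℤ) else -(i : ℤ) := by
  rw [Vf_sB_apply i h1 h2 i1 i2 hi1 hi2, Equiv.apply_symm_apply, Equiv.swap_apply_right]
  have e : (((i1 : ℕ)) : ℤ) + 1 = (i : ℤ) := by have := hi1; omega
  rw [e]

lemma L_s_le (i : ℕ) (h1 : 1 ≤ i) (h2 : i < r) (w : WB r)
    (i1 i2 : Fin r) (hi1 : (i1 : ℕ) = i - 1) (hi2 : (i2 : ℕ) = i) :
    LB (sB r i * w) ≤ LB w + 1 := by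
  classical
  have key := L_s_master i h1 h2 w i1 i2 hi1 hi2
  have hne : i1 ≠ i2 := by
    intro h
    rw [Fin.ext_iff, hi1, hi2] at h
    omega
  have hpq : w.right.symm i1 ≠ w.right.symm i2 := fun h => hne (w.right.symm.injective h)
  rw [Vf_eval1 i h1 i1 hi1 w, Vf_eval2 i i2 hi2 w, Vf_eval3 i h1 h2 i1 i2 hi1 hi2 w,
    Vf_eval4 i h1 h2 i1 i2 hi1 hi2 w] at key
  rcases lt_trichotomy (w.right.symm i1) (w.right.symm i2) with hlt | heq | hgt
  · rw [if_pos hlt, if_pos hlt] at key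
    split_ifs at key <;> omega
  · exact absurd heq hpq
  · rw [if_neg (not_lt.2 hgt.le), if_neg (not_lt.2 hgt.le)] at key
    split_ifs at key <;> omega

lemma L_s_desc (i : ℕ) (h1 : 1 ≤ i) (h2 : i < r) (w : WB r)
    (i1 i2 : Fin r) (hi1 : (i1 : ℕ) = i - 1) (hi2 : (i2 : ℕ) = i)
    (hdesc : (w.left i1 = 1 ∧ w.left i2 ≠ 1)
      ∨ (w.left i1 ≠ 1 ∧ w.left i2 ≠ 1 ∧ w.right.symm i1 < w.right.symm i2)
      ∨ (w.left i1 = 1 ∧ w.left i2 = 1 ∧ w.right.symm i2 < w.right.symm i1)) :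
    LB (sB r i * w) + 1 ≤ LB w := by
  classical
  have key := L_s_master i h1 h2 w i1 i2 hi1 hi2
  have hne : i1 ≠ i2 := by
    intro h
    rw [Fin.ext_iff, hi1, hi2] at h
    omega
  have hpq : w.right.symm i1 ≠ w.right.symm i2 := fun h => hne (w.right.symm.injective h)
  rw [Vf_eval1 i h1 i1 hi1 w, Vf_eval2 i i2 hi2 w, Vf_eval3 i h1 h2 i1 i2 hi1 hi2 w,
    Vf_eval4 i h1 h2 i1 i2 hi1 hi2 w] at key
  have hipos : 1 ≤ (i : ℤ) := by exact_mod_cast h1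
  rcases hdesc with ⟨hc1, hc2⟩ | ⟨hc1, hc2, hlt⟩ | ⟨hc1, hc2, hgt⟩
  · rw [if_pos hc1, if_pos hc1, if_neg hc2, if_neg hc2, if_pos hc1, if_neg hc2] at key
    rcases lt_trichotomy (w.right.symm i1) (w.right.symm i2) with hlt | heq | hgt
    · rw [if_pos hlt, if_pos hlt] at key
      rw [if_pos (by omega : -((i:ℤ)+1) < (i:ℤ)), if_pos (by omega : -(i:ℤ) < (i:ℤ)+1)] at key
      omega
    · exact absurd heq hpq
    · rw [if_neg (not_lt.2 hgt.le), if_neg (not_lt.2 hgt.le)] at key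
      rw [if_neg (by omega : ¬ ((i:ℤ) < -((i:ℤ)+1))), if_neg (by omega : ¬ ((i:ℤ)+1 < -(i:ℤ)))] at key
      omega
  · rw [if_neg hc1, if_neg hc1, if_neg hc2, if_neg hc2, if_neg hc1, if_neg hc2, if_pos hlt,
      if_pos hlt] at key
    rw [if_pos (by omega : -((i:ℤ)+1) < -(i:ℤ)), if_neg (by omega : ¬ (-(i:ℤ) < -((i:ℤ)+1)))] at key
    omega
  · rw [if_pos hc1, if_pos hc1, if_pos hc2, if_pos hc2, if_pos hc1, if_pos hc2,
      if_neg (not_lt.2 hgt.le), if_neg (not_lt.2 hgt.le)] at key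
    rw [if_pos (by omega : (i:ℤ) < (i:ℤ)+1), if_neg (by omega : ¬ ((i:ℤ)+1 < (i:ℤ)))] at key
    omega

end SwapCor
section Descent
variable {r : ℕ}

lemma perm_adj_mono (σ : Equiv.Perm (Fin r))
    (h : ∀ x y : Fin r, (x : ℕ) + 1 = (y : ℕ) → σ x < σ y) : σ = 1 := by
  have hmono : StrictMono σ := by
    have step : ∀ n (x y : Fin r), (y : ℕ) = (x : ℕ) + n + 1 → σ x < σ y := by
      intro n
      induction n with
      | zero => intro x y hxy; exact h x y (by omega)
      | succ m ih =>
        intro x y hxy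
        have hmid : ((x : ℕ) + m + 1) < r := by have := y.isLt; omega
        have h1 := ih x ⟨(x : ℕ) + m + 1, hmid⟩ rfl
        have h2 := h ⟨(x : ℕ) + m + 1, hmid⟩ y (by show (x:ℕ) + m + 1 + 1 = (y:ℕ); omega)
        exact h1.trans h2
    intro x y hxy
    exact step ((y : ℕ) - (x : ℕ) - 1) x y (by rw [Fin.lt_def] at hxy; omega)
  have heq : (σ : Fin r → Fin r) = id := by
    apply (hmono.range_inj strictMono_id).1
    rw [σ.surjective.range_eq, Set.range_id]
  apply Equiv.ext
  intro x
  exact congrFun heq x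

lemma exists_descent (hr : 0 < r) (w : WB r) (hw : w ≠ 1) :
    ∃ s ∈ genS r, LB (s * w) + 1 ≤ LB w := by
  classical
  by_cases h0 : w.left ⟨0, hr⟩ = 1
  · by_cases hdesc : ∃ i, 1 ≤ i ∧ ∃ h2 : i < r,
        ((w.left ⟨i - 1, by omega⟩ = 1 ∧ w.left ⟨i, h2⟩ ≠ 1)
          ∨ (w.left ⟨i - 1, by omega⟩ ≠ 1 ∧ w.left ⟨i, h2⟩ ≠ 1 ∧
              w.right.symm ⟨i - 1, by omega⟩ < w.right.symm ⟨i, h2⟩)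
          ∨ (w.left ⟨i - 1, by omega⟩ = 1 ∧ w.left ⟨i, h2⟩ = 1 ∧
              w.right.symm ⟨i, h2⟩ < w.right.symm ⟨i - 1, by omega⟩))
    · obtain ⟨i, h1, h2, hd⟩ := hdesc
      exact ⟨sB r i, Or.inr ⟨i, h1, h2, rfl⟩,
        L_s_desc i h1 h2 w ⟨i - 1, by omega⟩ ⟨i, h2⟩ rfl rfl hd⟩
    · exfalso
      push_neg at hdesc
      have hall : ∀ m, ∀ k : Fin r, (k : ℕ) = m → w.left k = 1 := by
        intro m
        induction m with
        | zero =>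
          intro k hk
          have : k = ⟨0, hr⟩ := Fin.ext hk
          rw [this]; exact h0
        | succ m ih =>
          intro k hk
          have hlt : m + 1 < r := hk ▸ k.isLt
          have hprev : w.left ⟨m, by omega⟩ = 1 := ih ⟨m, by omega⟩ rfl
          have hres := (hdesc (m + 1) (by omega) hlt).1 hprev
          have : k = ⟨m + 1, hlt⟩ := Fin.ext hk
          rw [this]
          exact hres
      have hperm : w.right.symm = 1 := by
        apply perm_adj_mono
        intro x y hxy
        have h2 : (y : ℕ) < r := y.isLt
        have h1 : 1 ≤ (y : ℕ) := by omega
        have hd := hdesc (y : ℕ) h1 h2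
        have ex : (⟨(y:ℕ) - 1, by omega⟩ : Fin r) = x := Fin.ext (by show (y:ℕ) - 1 = (x:ℕ); omega)
        have ey : (⟨(y:ℕ), h2⟩ : Fin r) = y := Fin.ext rfl
        rw [ex, ey] at hd
        have h3 := hd.2.2 (hall _ x rfl) (hall _ y rfl)
        apply lt_of_le_of_ne h3
        intro hc
        have := w.right.symm.injective hc
        rw [this] at hxy
        omega
      apply hw
      refine WB.ext ?_ ?_
      · funext k
        exact hall _ k rfl
      · show w.right = 1
        have : w.right⁻¹ = 1 := hperm
        rwa [inv_eq_one] at this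
  · refine ⟨tB r 0, Or.inl rfl, ?_⟩
    have := L_flip' (⟨0, hr⟩ : Fin r) w h0
    exact this

end Descent
section LenEq
variable {r : ℕ}

lemma Vf_one (p : Fin r) : Vf (1 : WB r) p = ((p : ℕ) : ℤ) + 1 := by
  unfold Vf
  rw [one_left, one_right]
  simp

lemma LB_one : LB (1 : WB r) = 0 := by
  unfold LB
  have h1 : invf (Vf (1 : WB r)) = 0 := by
    unfold invf
    rw [Finset.card_eq_zero, Finset.filter_eq_empty_iff]
    rintro ⟨x, y⟩ -
    rintro ⟨hlt, hinv⟩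
    rw [Vf_one, Vf_one] at hinv
    rw [Fin.lt_def] at hlt
    omega
  have h2 : nsum (1 : WB r) = 0 := by
    unfold nsum
    rw [Finset.sum_eq_zero_iff]
    intro k hk
    rw [Finset.mem_filter] at hk
    exact absurd (by rw [one_left]; rfl) hk.2
  omega

lemma LB_eq_zero {w : WB r} (h : LB w = 0) : w = 1 := by
  unfold LB at h
  have h1 : invf (Vf w) = 0 := by omega
  have h2 : nsum w = 0 := by omega
  have hleft : ∀ k, w.left k = 1 := by
    intro k
    by_contra hk
    unfold nsum at h2
    rw [Finset.sum_eq_zero_iff] at h2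
    have := h2 k (Finset.mem_filter.2 ⟨Finset.mem_univ _, hk⟩)
    omega
  have hnoinv : ∀ p q : Fin r, p < q → ¬ (Vf w q < Vf w p) := by
    intro p q hpq hinv
    unfold invf at h1
    rw [Finset.card_eq_zero, Finset.filter_eq_empty_iff] at h1
    exact h1 (Finset.mem_univ ((p, q) : Fin r × Fin r)) ⟨hpq, hinv⟩
  have hV : ∀ p : Fin r, Vf w p = ((w.right p : ℕ) : ℤ) + 1 := by
    intro p
    unfold Vf
    rw [if_pos (hleft _)]
  have hperm : w.right = 1 := by
    apply perm_adj_mono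
    intro x y hxy
    have hlt : x < y := by rw [Fin.lt_def]; omega
    have := hnoinv x y hlt
    rw [hV, hV] at this
    have hne : w.right x ≠ w.right y := fun hc => by
      have := w.right.injective hc
      rw [this] at hxy
      omega
    rw [Fin.lt_def]
    rw [Fin.ne_iff_vne] at hne
    omega
  apply WB.ext
  · funext k
    exact hleft k
  · exact hperm

lemma genS_mul_self {s : WB r} (hs : s ∈ genS r) (w : WB r) : s * (s * w) = w := by
  rcases hs with hs | ⟨i, h1, h2, hs⟩
  · rw [Set.mem_singleton_iff] at hs
    subst hs
    by_cases hr : 0 < r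
    · exact tB_mul_tB (⟨0, hr⟩ : Fin r) w
    · have : tB r 0 = 1 := by rw [tB, dif_neg (by omega)]
      rw [this, one_mul, one_mul]
  · subst hs
    rw [← mul_assoc]
    have : sB r i * sB r i = 1 := by
      rw [sB_eq i h1 h2 ⟨i - 1, by omega⟩ ⟨i, h2⟩ rfl rfl]
      refine WB.ext ?_ ?_
      · show 1 * (permAct r _) 1 = 1
        rw [map_one]
        rfl
      · show _ * _ = 1
        exact Equiv.swap_mul_self _ _
    rw [this, one_mul]

lemma LB_genS_le {s : WB r} (hs : s ∈ genS r) (w : WB r) : LB (s * w) ≤ LB w + 1 := by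
  rcases hs with hs | ⟨i, h1, h2, hs⟩
  · rw [Set.mem_singleton_iff] at hs
    subst hs
    by_cases hr : 0 < r
    · exact L_t0_le hr w
    · have : tB r 0 = 1 := by rw [tB, dif_neg (by omega)]
      rw [this, one_mul]
      omega
  · subst hs
    exact L_s_le i h1 h2 w ⟨i - 1, by omega⟩ ⟨i, h2⟩ rfl rfl

lemma exists_word (hr : 0 < r) : ∀ (n : ℕ) (w : WB r), LB w ≤ n →
    ∃ l : List (WB r), (∀ x ∈ l, x ∈ genS r) ∧ l.length ≤ n ∧ l.prod = w := by
  intro n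
  induction n with
  | zero =>
    intro w hw
    refine ⟨[], by simp, by simp, ?_⟩
    rw [List.prod_nil]
    exact (LB_eq_zero (by omega)).symm
  | succ n ih =>
    intro w hw
    by_cases h1 : w = 1
    · exact ⟨[], by simp, by simp, by rw [List.prod_nil, h1]⟩
    · obtain ⟨s, hs, hdec⟩ := exists_descent hr w h1
      obtain ⟨l, hl, hlen, hprod⟩ := ih (s * w) (by omega)
      refine ⟨s :: l, ?_, by simpa using hlen, ?_⟩
      · intro x hx
        rcases List.mem_cons.1 hx with hx | hx
        · rw [hx]; exact hs
        · exact hl x hx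
      · rw [List.prod_cons, hprod]
        exact genS_mul_self hs w

lemma LB_prod_le : ∀ l : List (WB r), (∀ x ∈ l, x ∈ genS r) → LB l.prod ≤ l.length := by
  intro l
  induction l with
  | nil => intro _; rw [List.prod_nil, LB_one]; simp
  | cons s l ih =>
    intro hl
    rw [List.prod_cons, List.length_cons]
    calc LB (s * l.prod) ≤ LB l.prod + 1 :=
          LB_genS_le (hl s List.mem_cons_self) _
      _ ≤ l.length + 1 := by
          have := ih (fun x hx => hl x (List.mem_cons_of_mem _ hx))
          omega

lemma len_eq_LB (hr : 0 < r) (w : WB r) : len r w = LB w := by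
  obtain ⟨l, hl, hlen, hprod⟩ := exists_word hr (LB w) w le_rfl
  have hmem : l.length ∈ {n | ∃ l' : List (WB r), (∀ x ∈ l', x ∈ genS r) ∧ l'.length = n ∧ l'.prod = w} :=
    ⟨l, hl, rfl, hprod⟩
  have hupper : len r w ≤ LB w := le_trans (Nat.sInf_le hmem) hlen
  have hlower : LB w ≤ len r w := by
    have hne : {n | ∃ l' : List (WB r), (∀ x ∈ l', x ∈ genS r) ∧ l'.length = n ∧ l'.prod = w}.Nonempty :=
      ⟨l.length, hmem⟩
    obtain ⟨l', hl', hlen', hprod'⟩ := Nat.sInf_mem hne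
    calc LB w = LB l'.prod := by rw [hprod']
      _ ≤ l'.length := LB_prod_le l' hl'
      _ = len r w := hlen'
  omega

end LenEq
section Cosets
variable {r : ℕ}

lemma mem_Comega_of (a : ℕ) (e : NB r) (he : ∀ k : Fin r, e k ≠ 1 → (k : ℕ) < a) :
    (⟨e, 1⟩ : WB r) ∈ Comega r a := by
  classical
  generalize hn : (Finset.univ.filter fun k => e k ≠ 1).card = n
  induction n generalizing e with
  | zero =>
    have heq : e = 1 := by
      funext k
      by_contra hk
      have : k ∈ Finset.univ.filter fun k => e k ≠ 1 := Finset.mem_filter.2 ⟨Finset.mem_univ _, hk⟩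
      rw [Finset.card_eq_zero] at hn
      rw [hn] at this
      exact absurd this (Finset.notMem_empty _)
    rw [heq]
    exact Subgroup.one_mem _
  | succ n ih =>
    have hne : (Finset.univ.filter fun k => e k ≠ 1).Nonempty := by
      rw [← Finset.card_pos, hn]; omega
    obtain ⟨k, hk⟩ := hne
    rw [Finset.mem_filter] at hk
    set e' := Function.update e k 1 with he'
    have hsplit : (⟨e, 1⟩ : WB r) = tB r (k : ℕ) * ⟨e', 1⟩ := by
      rw [tB_fin]
      refine (WB.ext ?_ ?_).symm
      · show eVec r k * (permAct r 1) e' = e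
        rw [map_one]
        funext j
        show eVec r k j * e' j = e j
        by_cases hj : j = k
        · subst hj
          rw [eVec, if_pos rfl, he', Function.update_self, mul_one]
          rcases zmod2_cases (e j) with h | h
          · exact absurd h hk.2
          · exact h.symm
        · rw [eVec, if_neg hj, he', Function.update_of_ne hj, one_mul]
      · show (1 : Equiv.Perm (Fin r)) * 1 = 1
        rw [one_mul]
    rw [hsplit]
    apply Subgroup.mul_mem
    · apply Subgroup.subset_closure
      exact ⟨(k : ℕ), he k hk.2, rfl⟩
    · apply ih
      · intro j hj
        by_cases hjk : j = k
        · subst hjk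
          rw [he', Function.update_self] at hj
          exact absurd rfl hj
        · rw [he', Function.update_of_ne hjk] at hj
          exact he j hj
      · have : (Finset.univ.filter fun j => e' j ≠ 1)
            = (Finset.univ.filter fun j => e j ≠ 1).erase k := by
          ext j
          rw [Finset.mem_erase, Finset.mem_filter, Finset.mem_filter]
          by_cases hjk : j = k
          · subst hjk
            rw [he', Function.update_self]
            simp
          · rw [he', Function.update_of_ne hjk]
            simp [hjk]
        have hmem : k ∈ Finset.univ.filter (fun j : Fin r => e j ≠ 1) :=
          Finset.mem_filter.2 ⟨Finset.mem_univ _, hk.2⟩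
        rw [this, Finset.card_erase_of_mem hmem, hn]
        omega

lemma mem_Comega_iff {a : ℕ} {x : WB r} :
    x ∈ Comega r a ↔ x.right = 1 ∧ ∀ k : Fin r, a ≤ (k : ℕ) → x.left k = 1 := by
  constructor
  · intro hx
    induction hx using Subgroup.closure_induction with
    | mem g hg =>
      obtain ⟨i, hi, rfl⟩ := hg
      by_cases hir : i < r
      · rw [tB, dif_pos hir]
        refine ⟨rfl, ?_⟩
        intro k hk
        show eVec r ⟨i, hir⟩ k = 1
        rw [eVec, if_neg]
        intro h
        rw [h] at hk
        simp only [Fin.val_mk] at hk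
        omega
      · rw [tB, dif_neg hir]
        exact ⟨rfl, fun k _ => rfl⟩
    | one => exact ⟨rfl, fun k _ => rfl⟩
    | mul g h hg hh ihg ihh =>
      refine ⟨by rw [mul_right, ihg.1, ihh.1, one_mul], ?_⟩
      intro k hk
      rw [mul_left, ihg.1, map_one, MulAut.one_apply, Pi.mul_apply, ihg.2 k hk, ihh.2 k hk,
        one_mul]
    | inv g hg ihg =>
      refine ⟨by rw [inv_right, ihg.1]; exact inv_one, ?_⟩
      intro k hk
      rw [inv_left, ihg.1, inv_one, map_one, MulAut.one_apply, Pi.inv_apply, ihg.2 k hk, inv_one]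
  · rintro ⟨h1, h2⟩
    have : x = ⟨x.left, 1⟩ := WB.ext rfl h1
    rw [this]
    apply mem_Comega_of
    intro k hk
    by_contra hka
    exact hk (h2 k (by omega))

end Cosets
section DrightChar
variable {r : ℕ}

lemma N_mul_left (e : NB r) (d : WB r) (k : Fin r) :
    ((⟨e, 1⟩ : WB r) * d).left k = e k * d.left k := by
  rw [mul_left]
  show (e * (permAct r 1) d.left) k = _
  rw [map_one, MulAut.one_apply, Pi.mul_apply]

lemma N_mul_right (e : NB r) (d : WB r) : ((⟨e, 1⟩ : WB r) * d).right = d.right := by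
  rw [mul_right]
  exact one_mul _

lemma split_e (e : NB r) (k : Fin r) (hk : e k ≠ 1) :
    (⟨e, 1⟩ : WB r) = tB r (k : ℕ) * ⟨Function.update e k 1, 1⟩ := by
  rw [tB_fin]
  refine (WB.ext ?_ ?_).symm
  · show eVec r k * (permAct r 1) (Function.update e k 1) = e
    rw [map_one, MulAut.one_apply]
    funext j
    show eVec r k j * Function.update e k 1 j = e j
    by_cases hj : j = k
    · subst hj
      rw [eVec, if_pos rfl, Function.update_self, mul_one]
      rcases zmod2_cases (e j) with h | h
      · exact absurd h hk
      · exact h.symm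
    · rw [eVec, if_neg hj, Function.update_of_ne hj, one_mul]
  · show (1 : Equiv.Perm (Fin r)) * 1 = 1
    rw [one_mul]

lemma LB_le_N_mul (d : WB r) (e : NB r) (he : ∀ k : Fin r, e k ≠ 1 → d.left k = 1) :
    LB d ≤ LB (⟨e, 1⟩ * d) := by
  classical
  generalize hn : (Finset.univ.filter fun k => e k ≠ 1).card = n
  induction n generalizing e with
  | zero =>
    have heq : e = 1 := by
      funext k
      by_contra hk
      have hmem : k ∈ Finset.univ.filter fun k => e k ≠ 1 :=
        Finset.mem_filter.2 ⟨Finset.mem_univ _, hk⟩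
      rw [Finset.card_eq_zero] at hn
      rw [hn] at hmem
      exact absurd hmem (Finset.notMem_empty _)
    have hone : (⟨e, 1⟩ : WB r) = 1 := by rw [heq]; rfl
    rw [hone, one_mul]
  | succ n ih =>
    have hne : (Finset.univ.filter fun k => e k ≠ 1).Nonempty := by
      rw [← Finset.card_pos, hn]; omega
    obtain ⟨k, hk⟩ := hne
    rw [Finset.mem_filter] at hk
    set e' := Function.update e k 1 with he'
    have hstep1 : LB d ≤ LB (⟨e', 1⟩ * d) := by
      apply ih
      · intro j hj
        by_cases hjk : j = k
        · subst hjk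
          rw [he', Function.update_self] at hj
          exact absurd rfl hj
        · rw [he', Function.update_of_ne hjk] at hj
          exact he j hj
      · have hfe : (Finset.univ.filter fun j => e' j ≠ 1)
            = (Finset.univ.filter fun j => e j ≠ 1).erase k := by
          ext j
          rw [Finset.mem_erase, Finset.mem_filter, Finset.mem_filter]
          by_cases hjk : j = k
          · subst hjk
            rw [he', Function.update_self]
            simp
          · rw [he', Function.update_of_ne hjk]
            simp [hjk]
        have hmem : k ∈ Finset.univ.filter (fun j : Fin r => e j ≠ 1) :=
          Finset.mem_filter.2 ⟨Finset.mem_univ _, hk.2⟩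
        rw [hfe, Finset.card_erase_of_mem hmem, hn]
        omega
    have hmidleft : ((⟨e', 1⟩ : WB r) * d).left k = 1 := by
      rw [N_mul_left, he', Function.update_self, one_mul]
      exact he k hk.2
    have hstep2 : LB (⟨e', 1⟩ * d) + 1 ≤ LB (tB r (k : ℕ) * (⟨e', 1⟩ * d)) :=
      L_flip k _ hmidleft
    have hsplit : (⟨e, 1⟩ : WB r) * d = tB r (k : ℕ) * (⟨e', 1⟩ * d) := by
      rw [← mul_assoc, ← split_e e k hk.2]
    rw [hsplit]
    omega

lemma mem_Dright_iff (hr : 0 < r) {a : ℕ} {d : WB r} :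
    d ∈ Dright r a ↔ ∀ k : Fin r, (k : ℕ) < a → d.left k = 1 := by
  constructor
  · intro hd k hka
    by_contra hne
    have hmem : tB r (k : ℕ) ∈ Comega r a := Subgroup.subset_closure ⟨(k : ℕ), hka, rfl⟩
    have hspec := hd _ hmem
    rw [len_eq_LB hr, len_eq_LB hr] at hspec
    have := L_flip' k d hne
    omega
  · intro h w hw
    rw [len_eq_LB hr, len_eq_LB hr]
    obtain ⟨h1, h2⟩ := mem_Comega_iff.1 hw
    have hw' : w = ⟨w.left, 1⟩ := WB.ext rfl h1
    rw [hw']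
    apply LB_le_N_mul
    intro k hk
    apply h k
    by_contra hka
    exact hk (h2 k (by omega))

lemma tB_mul_comm (d : WB r) (m : Fin r) :
    tB r (m : ℕ) * d = d * tB r ((d.right.symm m : Fin r) : ℕ) := by
  rw [tB_fin, tB_fin]
  refine WB.ext ?_ ?_
  · show eVec r m * (permAct r 1) d.left = d.left * (permAct r d.right) (eVec r (d.right.symm m))
    rw [map_one, MulAut.one_apply]
    funext j
    rw [Pi.mul_apply, Pi.mul_apply, permAct_apply]
    have heV : eVec r (d.right.symm m) (d.right.symm j) = eVec r m j := by
      rw [eVec, eVec]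
      by_cases hj : j = m
      · rw [if_pos hj, if_pos (by rw [hj])]
      · rw [if_neg hj, if_neg (fun hc => hj (d.right.symm.injective hc))]
    rw [heV, mul_comm]
  · show 1 * d.right = d.right * 1
    rw [one_mul, mul_one]

lemma conj_tB (d : WB r) (m : Fin r) :
    d⁻¹ * tB r (m : ℕ) * d = tB r ((d.right.symm m : Fin r) : ℕ) := by
  rw [mul_assoc, tB_mul_comm, ← mul_assoc, inv_mul_cancel, one_mul]

lemma tB_ne_one (m : Fin r) : tB r (m : ℕ) ≠ 1 := by
  intro h
  rw [tB_fin] at h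
  have := congrArg (fun w : WB r => w.left m) h
  simp only [one_left] at this
  rw [eVec, if_pos rfl] at this
  exact ofAdd_one_ne_one (by exact this)

lemma N_comm {g h : WB r} (hg : g.right = 1) (hh : h.right = 1) : g * h = h * g := by
  refine WB.ext ?_ ?_
  · rw [mul_left, mul_left, hg, hh, map_one, MulAut.one_apply, MulAut.one_apply]
    exact mul_comm _ _
  · rw [mul_right, mul_right, hg, hh]

end DrightChar
section Main
variable {r : ℕ}

lemma mul_left_apply {g : WB r} (hg : g.right = 1) (d : WB r) (k : Fin r) :
    (g * d).left k = g.left k * d.left k := by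
  rw [mul_left, hg, map_one, MulAut.one_apply, Pi.mul_apply]

lemma inv_left_apply (g : WB r) (k : Fin r) :
    g⁻¹.left k = (g.left (g.right k))⁻¹ := by
  rw [inv_left, permAct_apply, Pi.inv_apply]
  rfl

lemma Comega_mono {a a' : ℕ} (h : a ≤ a') : Comega r a ≤ Comega r a' := by
  apply Subgroup.closure_mono
  rintro w ⟨i, hi, rfl⟩
  exact ⟨i, by omega, rfl⟩

theorem stmt4' (a b i : ℕ) (hr : 2 ≤ r) (hai : a + i ≤ r) (hb : b ≤ r)
    (ε : ℕ → ℕ) (hε : ∀ j, ε j ≤ 1) (d : WB r) (hd : d ∈ D0 r (a + i) b) :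
    ((List.range i).map fun j => tB r (a + j) ^ ε j).prod * d ∈ D0 r a b := by
  classical
  have hr0 : 0 < r := by omega
  set u := ((List.range i).map fun j => tB r (a + j) ^ ε j).prod with hu
  have hP : u.right = 1 ∧ ∀ k : Fin r, ((k : ℕ) < a ∨ a + i ≤ (k : ℕ)) → u.left k = 1 := by
    apply List.prod_induction
      (p := fun g : WB r => g.right = 1 ∧
        ∀ k : Fin r, ((k : ℕ) < a ∨ a + i ≤ (k : ℕ)) → g.left k = 1)
    · intro x y hx hy
      refine ⟨by rw [mul_right, hx.1, hy.1, one_mul], fun k hk => ?_⟩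
      rw [mul_left_apply hx.1, hx.2 k hk, hy.2 k hk, one_mul]
    · exact ⟨rfl, fun k hk => rfl⟩
    · intro x hx
      rw [List.mem_map] at hx
      obtain ⟨j, hj, rfl⟩ := hx
      rw [List.mem_range] at hj
      rcases Nat.le_one_iff_eq_zero_or_eq_one.1 (hε j) with h | h
      · rw [h, pow_zero]
        exact ⟨rfl, fun k hk => rfl⟩
      · rw [h, pow_one]
        have haj : a + j < r := by omega
        refine ⟨by rw [tB, dif_pos haj], fun k hk => ?_⟩
        rw [tB, dif_pos haj]
        show eVec r ⟨a + j, haj⟩ k = 1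
        rw [eVec, if_neg]
        intro hc
        rw [hc] at hk
        simp only [Fin.val_mk] at hk
        omega
  obtain ⟨hur, hul⟩ := hP
  obtain ⟨⟨hdr1, hdr2⟩, hd3⟩ := hd
  have hdchar : ∀ k : Fin r, (k : ℕ) < a + i → d.left k = 1 := (mem_Dright_iff hr0).1 hdr1
  have hdchar2 : ∀ k : Fin r, (k : ℕ) < b → d⁻¹.left k = 1 := (mem_Dright_iff hr0).1 hdr2
  have hudr : (u * d).right = d.right := by rw [mul_right, hur, one_mul]
  refine ⟨⟨?_, ?_⟩, ?_⟩
  · rw [mem_Dright_iff hr0]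
    intro k hk
    rw [mul_left_apply hur, hul k (Or.inl hk), hdchar k (by omega), one_mul]
  · rw [mem_Dright_iff hr0]
    intro k hk
    rw [inv_left_apply, hudr, mul_left_apply hur]
    have hdk : d.left (d.right k) = 1 := by
      have := hdchar2 k hk
      rw [inv_left_apply] at this
      rwa [inv_eq_one] at this
    have huk : u.left (d.right k) = 1 := by
      apply hul
      by_contra hcon
      push_neg at hcon
      set m := d.right k with hm
      have htB : tB r (m : ℕ) ∈ Comega r (a + i) :=
        Subgroup.subset_closure ⟨(m : ℕ), by omega, rfl⟩
      have hsymm : d.right.symm m = k := by rw [hm, Equiv.symm_apply_apply]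
      have hconj : d⁻¹ * tB r (m : ℕ) * d ∈ Comega r b := by
        rw [conj_tB, hsymm]
        exact Subgroup.subset_closure ⟨(k : ℕ), hk, rfl⟩
      exact tB_ne_one m (hd3 (tB r (m : ℕ)) htB hconj)
    rw [hdk, huk, one_mul, inv_one]
  · intro x hx hconj
    have hxr : x.right = 1 := (mem_Comega_iff.1 hx).1
    have hxai : x ∈ Comega r (a + i) := Comega_mono (by omega) hx
    apply hd3 x hxai
    have hcomm : u⁻¹ * x * u = x := by
      have h1 : u⁻¹.right = 1 := by rw [inv_right, hur]; exact inv_one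
      rw [N_comm h1 hxr, mul_assoc, inv_mul_cancel, mul_one]
    have hre : (u * d)⁻¹ * x * (u * d) = d⁻¹ * (u⁻¹ * x * u) * d := by group
    rw [hre, hcomm] at hconj
    exact hconj

end Main


/-- For `a + i ≤ r`, `b ≤ r` and every choice `ε₁, …, ε_i ∈ {0, 1}`:
`t_{a+1}^{ε₁} t_{a+2}^{ε₂} ⋯ t_{a+i}^{ε_i} · D⁰_{ω_{a+i},ω_b} ⊆ D⁰_{ω_a,ω_b}`.
(Here `t_{a+j}` for `1 ≤ j ≤ i` is `tB r (a + (j-1))` in 0-indexed notation.) -/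
theorem stmt4 (r a b i : ℕ) (hr : 2 ≤ r) (hai : a + i ≤ r) (hb : b ≤ r)
    (ε : ℕ → ℕ) (hε : ∀ j, ε j ≤ 1) (d : WB r) (hd : d ∈ D0 r (a + i) b) :
    ((List.range i).map fun j => tB r (a + j) ^ ε j).prod * d ∈ D0 r a b := by
  exact stmt4' a b i hr hai hb ε hε d hd
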